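/- arXiv:2306.12625 — 2 statements merged into one kernel-verified Lean document; each statement's English description precedes it below -/
import Mathlib

section
/- Let $p$ be a probability measure and $q \ll p$ with density $\rho$. Suppose $K = e^{L - r}$ and $a = e^{L - r/2}$ where $L = D_{KL}(q \| p)$ and $r \geq 0$, and let $Y_1, \dots, Y_K$ be i.i.d. with law $p$ and $I_K(\mathbf{1}) = \frac{1}{K}\sum_{k=1}^K \rho(Y_k)$. Then for any $\delta \in (0,1)$, $\mathbb{P}(I_K(\mathbf{1}) \geq 1 - \delta) \leq e^{-r/2} + \frac{\mathbb{P}_{X \sim q}(\log \rho(X) \leq L - r/2)}{1 - \delta}$. -/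
open MeasureTheory ProbabilityTheory

/-! Put `a = e^{L - r/2}` and split according to whether some sample has `ρ(Y_k) > a`.
By Markov's inequality `p(ρ > a) ≤ 1/a`, so a union bound over the `K` samples gives
probability at most `K/a = e^{-r/2}`. If no sample exceeds `a`, the empirical mean of `ρ` is
that of the truncation `ρ·1{ρ ≤ a}`, whose `p`-mean is `q(ρ ≤ a) = q(log ρ ≤ L - r/2)`;
Markov's inequality for the empirical mean gives the second term. -/

section Density

variable {X : Type*} [MeasurableSpace X] (p q : Measure X)

lemma meas_lt_toReal_rnDeriv_le {a : ℝ} (ha : 0 < a) :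
    p {x | a < (q.rnDeriv p x).toReal} ≤ q Set.univ / ENNReal.ofReal a :=
  calc p {x | a < (q.rnDeriv p x).toReal}
      ≤ p {x | ENNReal.ofReal a ≤ q.rnDeriv p x} :=
        measure_mono fun _ hx => (ENNReal.ofReal_le_ofReal (le_of_lt hx)).trans
          ENNReal.ofReal_toReal_le
    _ ≤ (∫⁻ x, q.rnDeriv p x ∂p) / ENNReal.ofReal a :=
        meas_ge_le_lintegral_div (Measure.measurable_rnDeriv q p).aemeasurable
          (by simpa using ha) ENNReal.ofReal_ne_top
    _ ≤ q Set.univ / ENNReal.ofReal a := by gcongr; exact Measure.lintegral_rnDeriv_le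

lemma lintegral_indicator_toReal_rnDeriv_le {s : Set X} (hs : MeasurableSet s) :
    ∫⁻ x, ENNReal.ofReal (s.indicator (fun x => (q.rnDeriv p x).toReal) x) ∂p ≤ q s :=
  calc ∫⁻ x, ENNReal.ofReal (s.indicator (fun x => (q.rnDeriv p x).toReal) x) ∂p
      ≤ ∫⁻ x, s.indicator (q.rnDeriv p) x ∂p := by
        refine lintegral_mono fun x => ?_
        by_cases hx : x ∈ s
        · simpa [hx] using ENNReal.ofReal_toReal_le
        · simp [hx]
    _ = ∫⁻ x in s, q.rnDeriv p x ∂p := lintegral_indicator hs _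
    _ ≤ q s := Measure.setLIntegral_rnDeriv_le s

lemma measure_toReal_rnDeriv_le_le_measure_log_le [SigmaFinite q]
    [q.HaveLebesgueDecomposition p] (hqp : q ≪ p) (a : ℝ) :
    q {x | (q.rnDeriv p x).toReal ≤ a}
      ≤ q {x | Real.log (q.rnDeriv p x).toReal ≤ Real.log a} := by
  refine measure_mono_ae ?_
  filter_upwards [Measure.rnDeriv_pos hqp, hqp.ae_le (Measure.rnDeriv_lt_top q p)]
    with x hpos hfin hx
  exact Real.log_le_log (ENNReal.toReal_pos hpos.ne' hfin.ne) hx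

end Density

section Sampling

variable {X Ω : Type*} [MeasurableSpace X] [MeasurableSpace Ω] {μ : Measure Ω} {p : Measure X}
  {K : ℕ} {Y : Fin K → Ω → X}

lemma measure_exists_mem_le (hY : ∀ k, Measurable (Y k)) (hlaw : ∀ k, μ.map (Y k) = p)
    {S : Set X} (hS : MeasurableSet S) :
    μ {ω | ∃ k, Y k ω ∈ S} ≤ K * p S :=
  calc μ {ω | ∃ k, Y k ω ∈ S} = μ (⋃ k, Y k ⁻¹' S) := by congr 1; ext; simp
    _ ≤ ∑ k, μ (Y k ⁻¹' S) := measure_iUnion_fintype_le μ _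
    _ = ∑ _k : Fin K, p S := Finset.sum_congr rfl fun k _ => by
        rw [← Measure.map_apply (hY k) hS, hlaw]
    _ = K * p S := by simp

lemma lintegral_sum_comp_eq (hY : ∀ k, Measurable (Y k)) (hlaw : ∀ k, μ.map (Y k) = p)
    {f : X → ENNReal} (hf : Measurable f) :
    ∫⁻ ω, ∑ k, f (Y k ω) ∂μ = K * ∫⁻ x, f x ∂p := by
  rw [lintegral_finsetSum (f := fun k ω => f (Y k ω)) _ fun k _ => hf.comp (hY k)]
  simp_rw [← lintegral_map hf (hY _), hlaw]
  simp

lemma measure_le_sampleMean_le (hY : ∀ k, Measurable (Y k)) (hlaw : ∀ k, μ.map (Y k) = p)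
    {f : X → ℝ} (hf : Measurable f) (hf0 : 0 ≤ f) {c : ℝ} (hc : 0 < c) :
    μ {ω | c ≤ (∑ k, f (Y k ω)) / K}
      ≤ (∫⁻ x, ENNReal.ofReal (f x) ∂p) / ENNReal.ofReal c := by
  rcases K.eq_zero_or_pos with rfl | hK
  · simp [hc.not_ge]
  have hcK : ENNReal.ofReal (c * K) ≠ 0 := by
    rw [ne_eq, ENNReal.ofReal_eq_zero, not_le]; positivity
  have hsub : {ω | c ≤ (∑ k, f (Y k ω)) / K}
      ⊆ {ω | ENNReal.ofReal (c * K) ≤ ∑ k, ENNReal.ofReal (f (Y k ω))} := by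
    intro ω hω
    rw [Set.mem_ofPred_eq, ← ENNReal.ofReal_sum_of_nonneg fun k _ => hf0 _]
    exact ENNReal.ofReal_le_ofReal ((le_div_iff₀ (by positivity)).mp hω)
  calc μ {ω | c ≤ (∑ k, f (Y k ω)) / K}
      ≤ (∫⁻ ω, ∑ k, ENNReal.ofReal (f (Y k ω)) ∂μ) / ENNReal.ofReal (c * K) :=
        (measure_mono hsub).trans <| meas_ge_le_lintegral_div (by fun_prop) hcK
          ENNReal.ofReal_ne_top
    _ = (K * ∫⁻ x, ENNReal.ofReal (f x) ∂p) / (K * ENNReal.ofReal c) := by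
        rw [lintegral_sum_comp_eq hY hlaw hf.ennreal_ofReal, ENNReal.ofReal_mul hc.le,
          ENNReal.ofReal_natCast, mul_comm (ENNReal.ofReal c)]
    _ = (∫⁻ x, ENNReal.ofReal (f x) ∂p) / ENNReal.ofReal c :=
        ENNReal.mul_div_mul_left _ _ (by simp [hK.ne']) (ENNReal.natCast_ne_top K)

lemma measure_le_sampleMean_le_add (hY : ∀ k, Measurable (Y k))
    (hlaw : ∀ k, μ.map (Y k) = p) {f : X → ℝ} (hf : Measurable f) (hf0 : 0 ≤ f) {c : ℝ}
    (hc : 0 < c) (a : ℝ) :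
    μ {ω | c ≤ (∑ k, f (Y k ω)) / K}
      ≤ K * p {x | a < f x}
        + (∫⁻ x, ENNReal.ofReal ({x | f x ≤ a}.indicator f x) ∂p) / ENNReal.ofReal c := by
  have hcover : {ω | c ≤ (∑ k, f (Y k ω)) / K} ⊆ {ω | ∃ k, Y k ω ∈ {x | a < f x}}
      ∪ {ω | c ≤ (∑ k, {x | f x ≤ a}.indicator f (Y k ω)) / K} := by
    intro ω hω
    by_cases hlarge : ∃ k, a < f (Y k ω)
    · exact Or.inl hlarge
    simp only [not_exists, not_lt] at hlarge
    right
    simpa [Set.indicator_of_mem, hlarge] using hω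
  calc μ {ω | c ≤ (∑ k, f (Y k ω)) / K}
      ≤ μ {ω | ∃ k, Y k ω ∈ {x | a < f x}}
        + μ {ω | c ≤ (∑ k, {x | f x ≤ a}.indicator f (Y k ω)) / K} :=
        (measure_mono hcover).trans (measure_union_le _ _)
    _ ≤ _ := add_le_add (measure_exists_mem_le hY hlaw (measurableSet_lt measurable_const hf))
        (measure_le_sampleMean_le hY hlaw (hf.indicator (measurableSet_le hf measurable_const))
          (Set.indicator_nonneg fun x _ => hf0 x) hc)

end Sampling

theorem stmt_15_general {X : Type*} [MeasurableSpace X] (p q : Measure X)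
    [IsProbabilityMeasure p] [IsProbabilityMeasure q] (hqp : q ≪ p)
    (ρ : X → ℝ) (hρ : ρ = fun x => (q.rnDeriv p x).toReal)
    (L : ℝ)
    (r : ℝ)
    (K : ℕ) (hK : (K : ℝ) = Real.exp (L - r))
    {Ω : Type*} [MeasurableSpace Ω] (μ : Measure Ω)
    (Y : Fin K → Ω → X) (hmeas : ∀ k, Measurable (Y k))
    (hlaw : ∀ k, Measure.map (Y k) μ = p)
    (δ : ℝ) (hδ : δ ∈ Set.Ioo (0 : ℝ) 1) :
    μ {ω | 1 - δ ≤ (∑ k, ρ (Y k ω)) / K}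
      ≤ ENNReal.ofReal (Real.exp (-r / 2))
        + q {x | Real.log (ρ x) ≤ L - r / 2} / ENNReal.ofReal (1 - δ) := by
  subst hρ
  set a := Real.exp (L - r / 2)
  refine (measure_le_sampleMean_le_add hmeas hlaw (by fun_prop)
    (fun _ => ENNReal.toReal_nonneg) (by linarith [hδ.2]) a).trans (add_le_add ?_ ?_)
  · calc (K : ENNReal) * p {x | a < (q.rnDeriv p x).toReal}
        ≤ K * (q Set.univ / ENNReal.ofReal a) := by
          gcongr; exact meas_lt_toReal_rnDeriv_le p q (Real.exp_pos _)
      _ = ENNReal.ofReal (Real.exp (-r / 2)) := by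
          rw [measure_univ, mul_one_div, ← ENNReal.ofReal_natCast, hK,
            ← ENNReal.ofReal_div_of_pos (Real.exp_pos _), ← Real.exp_sub]
          ring_nf
  · refine ENNReal.div_le_div_right ?_ _
    calc _ ≤ q {x | (q.rnDeriv p x).toReal ≤ a} := lintegral_indicator_toReal_rnDeriv_le p q
          (measurableSet_le (by fun_prop) measurable_const)
      _ ≤ _ := by simpa [a] using measure_toReal_rnDeriv_le_le_measure_log_le p q hqp a

/-- Single-user converse part of Theorem 1 (Chatterjee–Diaconis): with
`K = e^{L-r}` samples and threshold `a = e^{L-r/2}`, where `L = D_KL(q‖p)`,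
the self-normalizing sum fails to reach `1-δ` except with the stated probability. -/
theorem stmt_15 {X : Type*} [MeasurableSpace X] (p q : Measure X)
    [IsProbabilityMeasure p] [IsProbabilityMeasure q] (hqp : q ≪ p)
    (ρ : X → ℝ) (hρ : ρ = fun x => (q.rnDeriv p x).toReal)
    (L : ℝ) (hL : L = ∫ x, Real.log (ρ x) ∂q)
    (r : ℝ) (hr : 0 ≤ r)
    (K : ℕ) (hK : (K : ℝ) = Real.exp (L - r))
    {Ω : Type*} [MeasurableSpace Ω] (μ : Measure Ω) [IsProbabilityMeasure μ]
    (Y : Fin K → Ω → X) (hmeas : ∀ k, Measurable (Y k))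
    (hindep : iIndepFun Y μ)
    (hlaw : ∀ k, Measure.map (Y k) μ = p)
    (δ : ℝ) (hδ : δ ∈ Set.Ioo (0 : ℝ) 1) :
    μ {ω | 1 - δ ≤ (∑ k, ρ (Y k ω)) / K}
      ≤ ENNReal.ofReal (Real.exp (-r / 2))
        + q {x | Real.log (ρ x) ≤ L - r / 2} / ENNReal.ofReal (1 - δ) :=
  stmt_15_general p q hqp ρ hρ L r K hK μ Y hmeas hlaw δ hδ
end

section
/- Let $p$ be a probability measure, $q \ll p$ with density $\rho$, $f$ square-integrable under $q$ with $\|f\|_q = \sqrt{\mathbb{E}_{X\sim q}[f(X)^2]}$, and set $L = D_{KL}(q\|p)$, $r \geq 0$, $K = e^{L+r}$, $a = e^{L + r/2}$. Let $Y_1, \dots, Y_K$ be i.i.d. with law $p$ and $I_K(f) = \frac{1}{K}\sum_{k=1}^K f(Y_k)\rho(Y_k)$, $I(f) = \mathbb{E}_{X \sim q}[f(X)]$. Then $\mathbb{E}|I_K(f) - I(f)| \leq \|f\|_q \big( e^{-r/4} + 2\sqrt{\mathbb{P}_{X\sim q}(\log \rho(X) > L + r/2)} \big)$. -/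
/-!
Truncate the weight at `a = e^{L + r/2}` and split `f ρ = g + h`, with `g = f ρ 1{ρ ≤ a}`.
Since `E_p[g²] ≤ a E_q[f²]`, the sample mean of `g` over `K` independent draws is within
`√(a/K) ‖f‖_q = e^{-r/4} ‖f‖_q` of `E_p[g]` in `L¹`. The part `h` lives on `{ρ > a}`: both its
sample mean and the bias `E_q[f] - E_p[g] = E_q[f 1{ρ > a}]` are bounded in `L¹` by
`E_q[|f| 1{ρ > a}] ≤ ‖f‖_q √(q(ρ > a))` (Cauchy–Schwarz), and `{ρ > a} ⊆ {log ρ > L + r/2}`.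
-/

open MeasureTheory ProbabilityTheory

section Moments

variable {α : Type*} [MeasurableSpace α] {μ : Measure α}

theorem integral_mul_le_sqrt_integral_sq_mul_sqrt_integral_sq {f g : α → ℝ}
    (hf : MemLp f 2 μ) (hg : MemLp g 2 μ) :
    ∫ x, f x * g x ∂μ ≤ √(∫ x, f x ^ 2 ∂μ) * √(∫ x, g x ^ 2 ∂μ) := by
  have inner_toLp {u v : α → ℝ} (hu : MemLp u 2 μ) (hv : MemLp v 2 μ) :
      inner ℝ (hu.toLp u) (hv.toLp v) = ∫ x, u x * v x ∂μ := by
    rw [L2.inner_def]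
    refine integral_congr_ae ?_
    filter_upwards [hu.coeFn_toLp, hv.coeFn_toLp] with x hux hvx
    simp [hux, hvx, mul_comm]
  have norm_toLp {u : α → ℝ} (hu : MemLp u 2 μ) : ‖hu.toLp u‖ = √(∫ x, u x ^ 2 ∂μ) := by
    simp_rw [sq, ← inner_toLp hu hu, real_inner_self_eq_norm_mul_norm,
      Real.sqrt_mul_self (norm_nonneg _)]
  rw [← inner_toLp hf hg, ← norm_toLp hf, ← norm_toLp hg]
  exact real_inner_le_norm _ _

theorem integral_abs_le_sqrt_integral_sq [IsProbabilityMeasure μ] {f : α → ℝ}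
    (hf : MemLp f 2 μ) : ∫ x, |f x| ∂μ ≤ √(∫ x, f x ^ 2 ∂μ) := by
  simpa [sq_abs] using
    integral_mul_le_sqrt_integral_sq_mul_sqrt_integral_sq hf.abs (memLp_const (1 : ℝ))

theorem setIntegral_abs_le_sqrt_integral_sq_mul_sqrt_measureReal [IsFiniteMeasure μ]
    {f : α → ℝ} (hf : MemLp f 2 μ) (s : Set α) :
    ∫ x in s, |f x| ∂μ ≤ √(∫ x, f x ^ 2 ∂μ) * √(μ.real s) := by
  have h := integral_mul_le_sqrt_integral_sq_mul_sqrt_integral_sq (hf.restrict s).abs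
    (memLp_const (1 : ℝ))
  simp only [Pi.abs_apply, mul_one, sq_abs, one_pow, integral_const, smul_eq_mul,
    measureReal_restrict_apply_univ] at h
  refine h.trans (mul_le_mul_of_nonneg_right (Real.sqrt_le_sqrt ?_) (Real.sqrt_nonneg _))
  exact setIntegral_le_integral hf.integrable_sq (ae_of_all _ fun x => sq_nonneg _)

theorem integral_abs_sub_integral_le_sqrt_variance [IsProbabilityMeasure μ] {Z : α → ℝ}
    (hZ : MemLp Z 2 μ) : ∫ x, |Z x - ∫ y, Z y ∂μ| ∂μ ≤ √(Var[Z; μ]) := by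
  rw [variance_eq_integral hZ.aemeasurable]
  exact integral_abs_le_sqrt_integral_sq (hZ.sub (memLp_const _))

theorem integral_abs_add_add_le [IsProbabilityMeasure μ] {U V : α → ℝ} (hU : Integrable U μ)
    (hV : Integrable V μ) (c : ℝ) :
    ∫ x, |U x + V x + c| ∂μ ≤ ∫ x, |U x| ∂μ + ∫ x, |V x| ∂μ + |c| := by
  calc ∫ x, |U x + V x + c| ∂μ ≤ ∫ x, (|U x| + |V x| + |c|) ∂μ :=
        integral_mono_of_nonneg (ae_of_all _ fun x => abs_nonneg _)
          ((hU.abs.add hV.abs).add (integrable_const _))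
          (ae_of_all _ fun x => abs_add_three _ _ _)
    _ = ∫ x, |U x| ∂μ + ∫ x, |V x| ∂μ + |c| := by
        have hUV : Integrable (fun x => |U x| + |V x|) μ := hU.abs.add hV.abs
        rw [integral_add hUV (integrable_const _), integral_add hU.abs hV.abs,
          integral_const, probReal_univ, one_smul]

end Moments

section SampleMean

variable {X Ω ι : Type*} [MeasurableSpace X] [MeasurableSpace Ω] {μ : Measure Ω}
  {p : Measure X} [Fintype ι] [Nonempty ι] {Y : ι → Ω → X}

theorem MeasureTheory.MeasurePreserving.integral_fun_comp {T : Ω → X}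
    (hT : MeasurePreserving T μ p) {g : X → ℝ} (hg : AEStronglyMeasurable g p) :
    ∫ ω, g (T ω) ∂μ = ∫ x, g x ∂p := by
  rw [← hT.map_eq] at hg ⊢
  exact (integral_map hT.aemeasurable hg).symm

theorem integral_abs_sampleMean_le {h : X → ℝ} (hh : Integrable h p)
    (hY : ∀ k, MeasurePreserving (Y k) μ p) :
    ∫ ω, |(∑ k, h (Y k ω)) / Fintype.card ι| ∂μ ≤ ∫ x, |h x| ∂p := by
  have hn : (0 : ℝ) < Fintype.card ι := by exact_mod_cast Fintype.card_pos
  have hhY : ∀ k, Integrable (fun ω => |h (Y k ω)|) μ := fun k =>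
    ((hY k).integrable_comp_of_integrable hh).abs
  calc ∫ ω, |(∑ k, h (Y k ω)) / Fintype.card ι| ∂μ
      ≤ ∫ ω, (∑ k, |h (Y k ω)|) / Fintype.card ι ∂μ := by
        refine integral_mono_of_nonneg (ae_of_all _ fun ω => abs_nonneg _)
          ((integrable_finsetSum _ fun k _ => hhY k).div_const _) (ae_of_all _ fun ω => ?_)
        dsimp only
        rw [abs_div, Nat.abs_cast]
        gcongr
        exact Finset.abs_sum_le_sum_abs _ _
    _ = ∫ x, |h x| ∂p := by
        rw [integral_div, integral_finsetSum _ fun k _ => hhY k]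
        simp_rw [(hY _).integral_fun_comp hh.abs.aestronglyMeasurable]
        simp only [Finset.sum_const, Finset.card_univ, nsmul_eq_mul]
        field_simp

theorem integral_abs_sampleMean_sub_le [IsProbabilityMeasure μ] {g : X → ℝ}
    (hg : Measurable g) (hg2 : MemLp g 2 p) (hY : ∀ k, MeasurePreserving (Y k) μ p)
    (hindep : Pairwise fun i j => IndepFun (Y i) (Y j) μ) :
    ∫ ω, |(∑ k, g (Y k ω)) / Fintype.card ι - ∫ x, g x ∂p| ∂μ
      ≤ √(Var[g; p] / Fintype.card ι) := by
  set n : ℝ := (Fintype.card ι : ℝ)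
  have hn : 0 < n := by simp only [n]; exact_mod_cast Fintype.card_pos
  have hgY : ∀ k, MemLp (fun ω => g (Y k ω)) 2 μ := fun k => hg2.comp_measurePreserving (hY k)
  set S : Ω → ℝ := ∑ k, fun ω => g (Y k ω) with hS
  have hS_apply : ∀ ω, S ω = ∑ k, g (Y k ω) := fun ω => by simp [S]
  have hS_mean : ∫ ω, S ω ∂μ = n * ∫ x, g x ∂p := by
    simp_rw [hS_apply]
    rw [integral_finsetSum _ fun k _ => (hgY k).integrable one_le_two]
    simp_rw [(hY _).integral_fun_comp hg.aestronglyMeasurable]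
    simp [n]
  have hS_var : Var[S; μ] = n * Var[g; p] := by
    rw [hS, IndepFun.variance_sum (fun k _ => hgY k)
      (fun i _ j _ hij => (hindep hij).comp hg hg)]
    simp_rw [(hY _).variance_fun_comp hg.aemeasurable]
    simp [n]
  calc ∫ ω, |(∑ k, g (Y k ω)) / n - ∫ x, g x ∂p| ∂μ
      = (∫ ω, |S ω - ∫ ω', S ω' ∂μ| ∂μ) / n := by
        rw [hS_mean, ← integral_div]
        congr 1 with ω
        rw [hS_apply, ← abs_of_pos hn, ← abs_div, abs_of_pos hn]
        field_simp
    _ ≤ √(Var[S; μ]) / n := by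
        gcongr
        exact integral_abs_sub_integral_le_sqrt_variance (memLp_finsetSum' _ fun k _ => hgY k)
    _ = √(Var[g; p] / n) := by
        rw [hS_var, Real.sqrt_div' _ hn.le, Real.sqrt_mul hn.le]
        field_simp
        rw [Real.sq_sqrt hn.le, mul_comm]

theorem integral_abs_sampleMean_add_sub_le [IsProbabilityMeasure μ] {g h : X → ℝ}
    (hg : Integrable g p) (hh : Integrable h p) (hY : ∀ k, MeasurePreserving (Y k) μ p) (c : ℝ) :
    ∫ ω, |(∑ k, (g (Y k ω) + h (Y k ω))) / Fintype.card ι - c| ∂μ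
      ≤ ∫ ω, |(∑ k, g (Y k ω)) / Fintype.card ι - ∫ x, g x ∂p| ∂μ + ∫ x, |h x| ∂p
        + |∫ x, g x ∂p - c| := by
  have hgY : Integrable (fun ω => (∑ k, g (Y k ω)) / Fintype.card ι - ∫ x, g x ∂p) μ :=
    ((integrable_finsetSum _ fun k _ => (hY k).integrable_comp_of_integrable hg).div_const
      _).sub (integrable_const _)
  have hhY : Integrable (fun ω => (∑ k, h (Y k ω)) / Fintype.card ι) μ :=
    (integrable_finsetSum _ fun k _ => (hY k).integrable_comp_of_integrable hh).div_const _
  calc _ = ∫ ω, |((∑ k, g (Y k ω)) / Fintype.card ι - ∫ x, g x ∂p)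
          + (∑ k, h (Y k ω)) / Fintype.card ι + (∫ x, g x ∂p - c)| ∂μ := by
        congr 1 with ω
        rw [Finset.sum_add_distrib]
        ring_nf
    _ ≤ _ := integral_abs_add_add_le hgY hhY _
    _ ≤ _ := by grw [integral_abs_sampleMean_le hh hY]

end SampleMean

theorem sq_indicator_mul_le {α : Type*} {w f : α → ℝ} {a : ℝ} (ha : 0 ≤ a) (x : α) (hw : 0 ≤ w x) :
    ({y | w y ≤ a}.indicator (fun y => f y * w y) x) ^ 2 ≤ a * (w x * f x ^ 2) := by
  by_cases hx : w x ≤ a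
  · rw [Set.indicator_of_mem (show x ∈ {y | w y ≤ a} from hx)]
    calc (f x * w x) ^ 2 = w x * (w x * f x ^ 2) := by ring
      _ ≤ a * (w x * f x ^ 2) := by gcongr
  · rw [Set.indicator_of_notMem (show x ∉ {y | w y ≤ a} from hx), sq, zero_mul]
    positivity

section ImportanceSampling

variable {X : Type*} [MeasurableSpace X] {p q : Measure X} [q.HaveLebesgueDecomposition p]
  [SigmaFinite q]

theorem integral_sq_indicator_mul_rnDeriv_le (hqp : q ≪ p) {f : X → ℝ} (hf2 : MemLp f 2 q)
    {a : ℝ} (ha : 0 ≤ a) :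
    ∫ x, ({y | (q.rnDeriv p y).toReal ≤ a}.indicator
      (fun y => f y * (q.rnDeriv p y).toReal) x) ^ 2 ∂p ≤ a * ∫ x, f x ^ 2 ∂q := by
  calc _ ≤ ∫ x, a * ((q.rnDeriv p x).toReal * f x ^ 2) ∂p :=
        integral_mono_of_nonneg (ae_of_all _ fun x => sq_nonneg _)
          (((integrable_toReal_rnDeriv_mul_iff hqp).2 hf2.integrable_sq).const_mul a)
          (ae_of_all _ fun x => sq_indicator_mul_le ha x ENNReal.toReal_nonneg)
    _ = a * ∫ x, f x ^ 2 ∂q := by rw [integral_const_mul, integral_toReal_rnDeriv_mul hqp]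

theorem integrable_mul_rnDeriv (hqp : q ≪ p) {f : X → ℝ} (hf : Integrable f q) :
    Integrable (fun x => f x * (q.rnDeriv p x).toReal) p := by
  simpa only [mul_comm] using (integrable_toReal_rnDeriv_mul_iff hqp).2 hf

theorem memLp_two_indicator_mul_rnDeriv (hqp : q ≪ p) {f : X → ℝ} (hf : Measurable f)
    (hf2 : MemLp f 2 q) {a : ℝ} (ha : 0 ≤ a) :
    MemLp ({y | (q.rnDeriv p y).toReal ≤ a}.indicator
      (fun y => f y * (q.rnDeriv p y).toReal)) 2 p := by
  have hρ : Measurable fun x => (q.rnDeriv p x).toReal :=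
    (Measure.measurable_rnDeriv q p).ennreal_toReal
  have hm : Measurable ({y | (q.rnDeriv p y).toReal ≤ a}.indicator
      (fun y => f y * (q.rnDeriv p y).toReal)) :=
    (hf.mul hρ).indicator (measurableSet_le hρ measurable_const)
  refine (memLp_two_iff_integrable_sq hm.aestronglyMeasurable).2 <|
    (((integrable_toReal_rnDeriv_mul_iff hqp).2 hf2.integrable_sq).const_mul a).mono'
      (hm.pow_const 2).aestronglyMeasurable (ae_of_all _ fun x => ?_)
  rw [Real.norm_of_nonneg (sq_nonneg _)]
  exact sq_indicator_mul_le ha x ENNReal.toReal_nonneg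

theorem integral_indicator_mul_rnDeriv (hqp : q ≪ p) (f : X → ℝ) {s : Set X}
    (hs : MeasurableSet s) :
    ∫ x, s.indicator (fun y => f y * (q.rnDeriv p y).toReal) x ∂p = ∫ x in s, f x ∂q := by
  simp_rw [integral_indicator hs, mul_comm (f _)]
  exact setIntegral_toReal_rnDeriv_mul hqp hs

theorem integral_abs_indicator_mul_rnDeriv (hqp : q ≪ p) (f : X → ℝ) {s : Set X}
    (hs : MeasurableSet s) :
    ∫ x, |s.indicator (fun y => f y * (q.rnDeriv p y).toReal) x| ∂p = ∫ x in s, |f x| ∂q := by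
  rw [← integral_indicator_mul_rnDeriv hqp _ hs]
  congr 1 with x
  by_cases hx : x ∈ s <;> simp [hx, abs_mul]

theorem abs_integral_indicator_compl_mul_rnDeriv_sub_le (hqp : q ≪ p) {f : X → ℝ}
    (hf : Integrable f q) {s : Set X} (hs : MeasurableSet s) :
    |∫ x, sᶜ.indicator (fun y => f y * (q.rnDeriv p y).toReal) x ∂p - ∫ x, f x ∂q|
      ≤ ∫ x in s, |f x| ∂q := by
  rw [integral_indicator_mul_rnDeriv hqp _ hs.compl, ← integral_add_compl hs hf,
    sub_add_cancel_right, abs_neg]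
  exact abs_integral_le_integral_abs

end ImportanceSampling

theorem integral_abs_importanceSampling_sub_le {X Ω ι : Type*} [MeasurableSpace X]
    [MeasurableSpace Ω] {μ : Measure Ω} [IsProbabilityMeasure μ] {p q : Measure X}
    [IsProbabilityMeasure p] [IsFiniteMeasure q] [Fintype ι] [Nonempty ι] {Y : ι → Ω → X}
    (hqp : q ≪ p) {f : X → ℝ} (hf : Measurable f) (hf2 : MemLp f 2 q) {a : ℝ} (ha : 0 ≤ a)
    (hY : ∀ k, MeasurePreserving (Y k) μ p)
    (hindep : Pairwise fun i j => IndepFun (Y i) (Y j) μ) :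
    ∫ ω, |(∑ k, f (Y k ω) * (q.rnDeriv p (Y k ω)).toReal) / Fintype.card ι - ∫ x, f x ∂q| ∂μ
      ≤ √(∫ x, f x ^ 2 ∂q) *
        (√(a / Fintype.card ι) + 2 * √(q.real {x | a < (q.rnDeriv p x).toReal})) := by
  set ρ : X → ℝ := fun x => (q.rnDeriv p x).toReal
  have hρ : Measurable ρ := (Measure.measurable_rnDeriv q p).ennreal_toReal
  set B := {x | a < ρ x}
  have hB : MeasurableSet B := measurableSet_lt measurable_const hρ
  have hBc : {x | ρ x ≤ a} = Bᶜ := by ext; simp [B]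
  set g := {x | ρ x ≤ a}.indicator fun x => f x * ρ x
  set h := B.indicator fun x => f x * ρ x
  have hg2 : MemLp g 2 p := memLp_two_indicator_mul_rnDeriv hqp hf hf2 ha
  have hg : Measurable g := (hf.mul hρ).indicator (measurableSet_le hρ measurable_const)
  have split : ∀ x, f x * ρ x = g x + h x := fun x => by
    simp only [g, h, hBc]
    exact (congrFun (Set.indicator_compl_add_self B fun x => f x * ρ x) x).symm
  have bulk : ∫ ω, |(∑ k, g (Y k ω)) / Fintype.card ι - ∫ x, g x ∂p| ∂μ
      ≤ √(∫ x, f x ^ 2 ∂q) * √(a / Fintype.card ι) := by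
    refine (integral_abs_sampleMean_sub_le hg hg2 hY hindep).trans ?_
    rw [← Real.sqrt_mul (integral_nonneg fun x => sq_nonneg _), mul_div_assoc']
    gcongr
    calc Var[g; p] ≤ ∫ x, g x ^ 2 ∂p := variance_le_expectation_sq hg.aestronglyMeasurable
      _ ≤ a * ∫ x, f x ^ 2 ∂q := integral_sq_indicator_mul_rnDeriv_le hqp hf2 ha
      _ = _ := mul_comm _ _
  have tail := setIntegral_abs_le_sqrt_integral_sq_mul_sqrt_measureReal hf2 B
  calc _ = ∫ ω, |(∑ k, (g (Y k ω) + h (Y k ω))) / Fintype.card ι - ∫ x, f x ∂q| ∂μ := by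
        simp_rw [← split]
        rfl
    _ ≤ _ := integral_abs_sampleMean_add_sub_le (hg2.integrable one_le_two)
          ((integrable_mul_rnDeriv hqp (hf2.integrable one_le_two)).indicator hB) hY _
    _ ≤ √(∫ x, f x ^ 2 ∂q) * √(a / Fintype.card ι) + √(∫ x, f x ^ 2 ∂q) * √(q.real B)
          + √(∫ x, f x ^ 2 ∂q) * √(q.real B) := by
        gcongr
        · exact (integral_abs_indicator_mul_rnDeriv hqp f hB).trans_le tail
        · have bias := abs_integral_indicator_compl_mul_rnDeriv_sub_le hqp
            (hf2.integrable one_le_two) hB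
          rw [← hBc] at bias
          exact bias.trans tail
    _ = _ := by ring

theorem stmt_16_general {X : Type*} [MeasurableSpace X] (p q : Measure X)
    [IsProbabilityMeasure p] [IsProbabilityMeasure q] (hqp : q ≪ p)
    (ρ : X → ℝ) (hρ : ρ = fun x => (q.rnDeriv p x).toReal)
    (f : X → ℝ) (hf : Measurable f) (hL2 : MemLp f 2 q)
    (L : ℝ)
    (r : ℝ)
    (K : ℕ) (hK : (K : ℝ) = Real.exp (L + r))
    {Ω : Type*} [MeasurableSpace Ω] (μ : Measure Ω) [IsProbabilityMeasure μ]
    (Y : Fin K → Ω → X) (hmeas : ∀ k, Measurable (Y k))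
    (hindep : iIndepFun Y μ)
    (hlaw : ∀ k, Measure.map (Y k) μ = p) :
    ∫ ω, |(∑ k, f (Y k ω) * ρ (Y k ω)) / K - ∫ x, f x ∂q| ∂μ
      ≤ Real.sqrt (∫ x, f x ^ 2 ∂q) *
        (Real.exp (-r / 4)
          + 2 * Real.sqrt ((q {x | L + r / 2 < Real.log (ρ x)}).toReal)) := by
  subst hρ
  have : Nonempty (Fin K) := ⟨⟨0, by exact_mod_cast hK ▸ Real.exp_pos (L + r)⟩⟩
  have rate : √(Real.exp (L + r / 2) / K) = Real.exp (-r / 4) := by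
    rw [hK, ← Real.exp_sub, show L + r / 2 - (L + r) = -r / 4 + -r / 4 by ring, Real.exp_add,
      Real.sqrt_mul_self (Real.exp_pos _).le]
  have tail : q.real {x | Real.exp (L + r / 2) < (q.rnDeriv p x).toReal}
      ≤ (q {x | L + r / 2 < Real.log (q.rnDeriv p x).toReal}).toReal :=
    measureReal_mono fun x hx => (Real.lt_log_iff_exp_lt ((Real.exp_pos _).trans hx)).2 hx
  have key := integral_abs_importanceSampling_sub_le hqp hf hL2 (Real.exp_pos (L + r / 2)).le
    (fun k => ⟨hmeas k, hlaw k⟩) (fun i j hij => hindep.indepFun hij)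
  rw [Fintype.card_fin, rate] at key
  refine key.trans ?_
  gcongr

/-- Single-user direct part of Theorem 1: with `K = e^{L+r}` samples, the
unnormalized importance sampling estimate satisfies
`𝔼|I_K(f) - I(f)| ≤ ‖f‖_q (e^{-r/4} + 2√ℙ_{X∼q}(log ρ(X) > L + r/2))`. -/
theorem stmt_16 {X : Type*} [MeasurableSpace X] (p q : Measure X)
    [IsProbabilityMeasure p] [IsProbabilityMeasure q] (hqp : q ≪ p)
    (ρ : X → ℝ) (hρ : ρ = fun x => (q.rnDeriv p x).toReal)
    (f : X → ℝ) (hf : Measurable f) (hL2 : MemLp f 2 q)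
    (L : ℝ) (hL : L = ∫ x, Real.log (ρ x) ∂q)
    (r : ℝ) (hr : 0 ≤ r)
    (K : ℕ) (hK : (K : ℝ) = Real.exp (L + r))
    {Ω : Type*} [MeasurableSpace Ω] (μ : Measure Ω) [IsProbabilityMeasure μ]
    (Y : Fin K → Ω → X) (hmeas : ∀ k, Measurable (Y k))
    (hindep : iIndepFun Y μ)
    (hlaw : ∀ k, Measure.map (Y k) μ = p) :
    ∫ ω, |(∑ k, f (Y k ω) * ρ (Y k ω)) / K - ∫ x, f x ∂q| ∂μ
      ≤ Real.sqrt (∫ x, f x ^ 2 ∂q) *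
        (Real.exp (-r / 4)
          + 2 * Real.sqrt ((q {x | L + r / 2 < Real.log (ρ x)}).toReal)) :=
  stmt_16_general p q hqp ρ hρ f hf hL2 L r K hK μ Y hmeas hindep hlaw
end
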